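/- arXiv:2308.13890 — 5 statements merged into one kernel-verified Lean document; each statement's English description precedes it below -/
import Mathlib

section
/- Let G be a graph and H an edge-subgraph obtained by k iterations of: compute a spanning forest of the current graph, add its edges to H, and delete them from the current graph. Then for every vertex cut (V1, V2) of G, either H contains all edges of G crossing the cut, or H contains at least k edges crossing the cut. -/
/-- The edges of `G` crossing the cut `(S, Sᶜ)`. -/
def crossingEdges {V : Type*} (G : SimpleGraph V) (S : Set V) : Set (Sym2 V) :=
  {e | e ∈ G.edgeSet ∧ ∃ u v, e = s(u, v) ∧ u ∈ S ∧ v ∉ S}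

/-- If H is obtained by k iterations of removing a spanning forest from the current
graph and adding its edges to H, then for every cut of G, H contains either all
crossing edges of G or at least k crossing edges. -/
theorem stmt_1 {V : Type*} [Fintype V] (G : SimpleGraph V) (k : ℕ)
    (Gs T : ℕ → SimpleGraph V)
    (h0 : Gs 0 = G)
    (hforest : ∀ i < k, T i ≤ Gs i ∧ (T i).IsAcyclic ∧
      ∀ u v : V, (T i).Reachable u v ↔ (Gs i).Reachable u v)
    (hstep : ∀ i < k, Gs (i + 1) = Gs i \ T i)
    (H : SimpleGraph V) (hH : H = ⨆ i ∈ Finset.range k, T i)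
    (S : Set V) (hS : S.Nonempty) (hS' : Sᶜ.Nonempty) :
    crossingEdges G S ⊆ H.edgeSet ∨ k ≤ (crossingEdges G S ∩ H.edgeSet).ncard := by
  by_cases hsub : crossingEdges G S ⊆ H.edgeSet
  · exact Or.inl hsub
  right
  rw [Set.not_subset] at hsub
  obtain ⟨e, he, heH⟩ := hsub
  -- T i ≤ H for i < k
  have hTH : ∀ i < k, T i ≤ H := by
    intro i hi
    rw [hH]
    exact le_iSup₂ (f := fun i (_ : i ∈ Finset.range k) => T i) i (Finset.mem_range.mpr hi)
  -- Gs is antitone on [0, k]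
  have hmono : ∀ i j, i ≤ j → j ≤ k → Gs j ≤ Gs i := by
    intro i j hij hjk
    induction j with
    | zero => simp [Nat.le_zero.mp hij]
    | succ n ih =>
      rcases Nat.eq_or_lt_of_le hij with h | h
      · rw [h]
      · have hn : i ≤ n := Nat.lt_succ_iff.mp h
        have := ih hn (le_of_lt (Nat.lt_of_succ_le hjk))
        rw [hstep n (Nat.lt_of_succ_le hjk)]
        exact le_trans sdiff_le this
  have hGle : ∀ i ≤ k, Gs i ≤ G := fun i hi => h0 ▸ hmono 0 i (Nat.zero_le i) hi
  -- e stays in all Gs i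
  have hstay : ∀ i ≤ k, e ∈ (Gs i).edgeSet := by
    intro i hi
    induction i with
    | zero => rw [h0]; exact he.1
    | succ n ih =>
      have hn : n < k := Nat.lt_of_succ_le hi
      have hen := ih (le_of_lt hn)
      rw [hstep n hn, SimpleGraph.edgeSet_sdiff]
      exact ⟨hen, fun heT => heH (SimpleGraph.edgeSet_mono (hTH n hn) heT)⟩
  obtain ⟨u, v, hef, hu, hv⟩ := he.2
  -- crossing edge in each T i
  have key : ∀ i < k, ∃ a b, (T i).Adj a b ∧ a ∈ S ∧ b ∉ S := by
    intro i hi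
    have hadj : (Gs i).Adj u v := by
      have := hstay i (le_of_lt hi)
      rwa [hef, SimpleGraph.mem_edgeSet] at this
    have hreach : (T i).Reachable u v := ((hforest i hi).2.2 u v).mpr hadj.reachable
    obtain ⟨p⟩ := hreach
    obtain ⟨d, _, hd1, hd2⟩ := p.exists_boundary_dart S hu hv
    exact ⟨d.fst, d.snd, d.adj, hd1, hd2⟩
  choose a b hab haS hbS using fun i : Fin k => key i i.2
  set f : Fin k → Sym2 V := fun i => s(a i, b i) with hf
  have hfT : ∀ i : Fin k, f i ∈ (T i).edgeSet := fun i => hab i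
  have haux : ∀ i j : Fin k, (i : ℕ) < (j : ℕ) → f i ≠ f j := by
    intro i j hlt hij
    have h1 : f i ∈ (T j).edgeSet := hij ▸ hfT j
    have h2 : f i ∈ (Gs (i + 1)).edgeSet :=
      SimpleGraph.edgeSet_mono ((hforest j j.2).1.trans (hmono (i + 1) j hlt (le_of_lt j.2)))
        h1
    rw [hstep i i.2, SimpleGraph.edgeSet_sdiff] at h2
    exact h2.2 (hfT i)
  have hinj : Function.Injective f := by
    intro i j hij
    rcases lt_trichotomy (i : ℕ) (j : ℕ) with h | h | h
    · exact absurd hij (haux i j h)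
    · exact Fin.ext h
    · exact absurd hij.symm (haux j i h)
  have hrange : Set.range f ⊆ crossingEdges G S ∩ H.edgeSet := by
    rintro _ ⟨i, rfl⟩
    refine ⟨⟨?_, a i, b i, rfl, haS i, hbS i⟩, ?_⟩
    · exact SimpleGraph.edgeSet_mono ((hforest i i.2).1.trans (hGle i (le_of_lt i.2))) (hfT i)
    · exact SimpleGraph.edgeSet_mono (hTH i i.2) (hfT i)
  calc k = Nat.card (Fin k) := (Nat.card_eq_fintype_card.trans (Fintype.card_fin k)).symm
    _ = Nat.card (Set.range f) := (Nat.card_range_of_injective hinj).symm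
    _ = (Set.range f).ncard := Nat.card_coe_set_eq _
    _ ≤ _ := Set.ncard_le_ncard hrange (Set.toFinite _)
end

section
/- Let G be a connected graph with a distinguished spanning subtree structure: a partition of V into clusters, each cluster having a center c, such that for every non-center vertex v in a cluster, the edge (v, c) is in H. Suppose additionally that H contains, for every vertex v and every cluster X not containing v such that G has an edge from v to X, at least one edge from v to some vertex of X. Then H is a 3-spanner of G: dist_H(s,t) ≤ 3·dist_G(s,t) for all s,t. -/
/-- Cluster structure (a partition into clusters, each with a designated center,
with all edges from cluster members to their center present in H) plus one H-edge
from each vertex to each G-adjacent cluster implies H is a 3-spanner of G. -/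
theorem stmt_3 {V : Type*} [Fintype V] (G H : SimpleGraph V) (hG : G.Connected)
    (hHG : H ≤ G) (center : V → V)
    (hidem : ∀ v, center (center v) = center v)
    (hcen : ∀ v, v ≠ center v → H.Adj v (center v))
    (hcl : ∀ v c, center c = c → center v ≠ c →
      (∃ w, center w = c ∧ G.Adj v w) → ∃ w, center w = c ∧ H.Adj v w) :
    ∀ s t : V, H.edist s t ≤ 3 * G.edist s t := by
  have toCen : ∀ u : V, H.edist u (center u) ≤ 1 := by
    intro u
    by_cases h : u = center u
    · rw [← h, SimpleGraph.edist_self]; exact zero_le_one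
    · exact le_of_eq (SimpleGraph.edist_eq_one_iff_adj.mpr (hcen u h))
  have adj3 : ∀ u v : V, G.Adj u v → H.edist u v ≤ 3 := by
    intro u v huv
    by_cases h : center u = center v
    · calc H.edist u v ≤ H.edist u (center u) + H.edist (center u) v :=
            SimpleGraph.edist_triangle
        _ ≤ 1 + 1 := by
            gcongr
            · exact toCen u
            · rw [SimpleGraph.edist_comm, h]; exact toCen v
        _ ≤ 3 := by norm_num
    · obtain ⟨w, hw, hadj⟩ := hcl u (center v) (hidem v) h ⟨v, rfl, huv⟩
      calc H.edist u v ≤ H.edist u w + H.edist w v := SimpleGraph.edist_triangle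
        _ ≤ H.edist u w + (H.edist w (center v) + H.edist (center v) v) := by
            gcongr
            exact SimpleGraph.edist_triangle
        _ ≤ 1 + (1 + 1) := by
            gcongr
            · exact le_of_eq (SimpleGraph.edist_eq_one_iff_adj.mpr hadj)
            · rw [← hw]; exact toCen w
            · rw [SimpleGraph.edist_comm]; exact toCen v
        _ ≤ 3 := by norm_num
  have walkBound : ∀ (s t : V) (p : G.Walk s t), H.edist s t ≤ 3 * p.length := by
    intro s t p
    induction p with
    | nil => simp [SimpleGraph.edist_self]
    | cons h p ih =>
      calc H.edist _ _ ≤ H.edist _ _ + H.edist _ _ := SimpleGraph.edist_triangle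
        _ ≤ 3 + 3 * p.length := add_le_add (adj3 _ _ h) ih
        _ = 3 * (p.length + 1) := by push_cast; ring
        _ = 3 * (SimpleGraph.Walk.cons h p).length := by
            rw [SimpleGraph.Walk.length_cons]; push_cast; ring
  intro s t
  obtain ⟨p, hp⟩ := hG.exists_walk_length_eq_edist s t
  calc H.edist s t ≤ 3 * p.length := walkBound s t p
    _ = 3 * G.edist s t := by rw [hp]
end

section
/- Let G be a graph whose vertices are partitioned into clusters each with a designated center, and let H be a subgraph of G containing, for each non-center vertex v, the edge from v to its cluster center, and for each pair of distinct clusters (C1, C2) with at least one G-edge between them, at least one such edge. Then for every edge (s,t) of G with s,t in different clusters, dist_H(s,t) ≤ 5; and for s,t in the same cluster, dist_H(s,t) ≤ 2. -/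
lemma edist_le_one' {V : Type*} (H : SimpleGraph V) {a b : V} (h : a = b ∨ H.Adj a b) :
    H.edist a b ≤ 1 := by
  rcases h with rfl | h
  · simp [SimpleGraph.edist_self]
  · calc H.edist a b ≤ (h.toWalk.length : ℕ∞) := SimpleGraph.edist_le _
    _ ≤ 1 := by simp

/-- Cluster structure with center edges, plus one recorded H-edge between every
pair of distinct G-adjacent clusters: then every G-edge between different clusters
has H-distance at most 5 between its endpoints, and every G-edge inside a cluster
has H-distance at most 2. -/
theorem stmt_5 {V : Type*} (G H : SimpleGraph V) (hHG : H ≤ G) (center : V → V)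
    (hidem : ∀ v, center (center v) = center v)
    (hcen : ∀ v, v ≠ center v → H.Adj v (center v))
    (hpair : ∀ c1 c2 : V, center c1 = c1 → center c2 = c2 → c1 ≠ c2 →
      (∃ u w, center u = c1 ∧ center w = c2 ∧ G.Adj u w) →
      ∃ u w, center u = c1 ∧ center w = c2 ∧ H.Adj u w) :
    ∀ s t : V, G.Adj s t →
      (center s ≠ center t → H.edist s t ≤ 5) ∧
      (center s = center t → H.edist s t ≤ 2) := by
  intro s t hst
  have step : ∀ a : V, H.edist a (center a) ≤ 1 := fun a => by
    by_cases h : a = center a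
    · exact edist_le_one' H (Or.inl h)
    · exact edist_le_one' H (Or.inr (hcen a h))
  constructor
  · intro hne
    obtain ⟨u, w, hu, hw, huw⟩ := hpair (center s) (center t) (hidem s) (hidem t) hne
      ⟨s, t, rfl, rfl, hst⟩
    have h1 : H.edist s (center s) ≤ 1 := step s
    have h2 : H.edist (center s) u ≤ 1 := by
      rw [SimpleGraph.edist_comm, ← hu]; exact step u
    have h3 : H.edist u w ≤ 1 := edist_le_one' H (Or.inr huw)
    have h4 : H.edist w (center t) ≤ 1 := by rw [← hw]; exact step w
    have h5 : H.edist (center t) t ≤ 1 := by rw [SimpleGraph.edist_comm]; exact step t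
    calc H.edist s t ≤ H.edist s (center s) + H.edist (center s) u + H.edist u w
          + H.edist w (center t) + H.edist (center t) t := by
          calc H.edist s t ≤ H.edist s w + H.edist w (center t) + H.edist (center t) t := by
                refine le_trans (SimpleGraph.edist_triangle (v := center t)) ?_
                exact add_le_add (SimpleGraph.edist_triangle (v := w)) le_rfl
          _ ≤ (H.edist s u + H.edist u w) + H.edist w (center t) + H.edist (center t) t := by
                gcongr
                exact SimpleGraph.edist_triangle (v := u)
          _ ≤ (H.edist s (center s) + H.edist (center s) u + H.edist u w)
              + H.edist w (center t) + H.edist (center t) t := by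
                gcongr
                exact SimpleGraph.edist_triangle (v := center s)
          _ = _ := by ring
      _ ≤ 1 + 1 + 1 + 1 + 1 := by gcongr
      _ = 5 := by norm_num
  · intro heq
    calc H.edist s t ≤ H.edist s (center s) + H.edist (center s) t := SimpleGraph.edist_triangle
      _ ≤ 1 + 1 := by
          gcongr
          · exact step s
          · rw [heq, SimpleGraph.edist_comm]; exact step t
      _ = 2 := by norm_num
end

section
/- In the Baswana–Sen style construction: if in every round each vertex is within recorded-edge distance r-1 of its cluster center at the start of round r (clusters have recorded-edge radius at most r-1), and a vertex s records an edge to some vertex w in the cluster of t in a round r ≤ k, then there is a path of recorded edges from s to t of length at most 2k - 1. -/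
/-- Baswana–Sen style: if at the start of each round r every clustered vertex has a
recorded-edge path of length ≤ r-1 to its cluster center, and in some round r ≤ k a
vertex s records an edge to a vertex w in the cluster of t, then there is a path of
recorded edges from s to t of length at most 2k-1. -/
theorem stmt_7 {V : Type*} (R : SimpleGraph V) (cl : ℕ → V → Option V) (k : ℕ)
    (hrad : ∀ r, 1 ≤ r → ∀ v c, cl r v = some c → ∃ p : R.Walk v c, p.length ≤ r - 1)
    (r : ℕ) (hr1 : 1 ≤ r) (hrk : r ≤ k)
    (s w t c : V) (hw : cl r w = some c) (ht : cl r t = some c)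
    (hsw : R.Adj s w) :
    ∃ p : R.Walk s t, p.length ≤ 2 * k - 1 := by
  obtain ⟨p1, hp1⟩ := hrad r hr1 w c hw
  obtain ⟨p2, hp2⟩ := hrad r hr1 t c ht
  refine ⟨SimpleGraph.Walk.cons hsw (p1.append p2.reverse), ?_⟩
  simp only [SimpleGraph.Walk.length_cons, SimpleGraph.Walk.length_append,
    SimpleGraph.Walk.length_reverse]
  omega
end

section
/- Let V be partitioned into parts P_1, ..., P_q, let R be a forest on V whose components refine into the parts (R spans each part), and let B ⊆ E(G) be the edges of G between different parts with |B| ≤ εn. Then the subgraph with edge set R ∪ B has at most (1+ε)n edges and has the same connected components as G. -/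
open SimpleGraph

private noncomputable def theRoot {V : Type*} (G : SimpleGraph V) (v : V) : V :=
  (G.connectedComponentMk v).out

private lemma reach_theRoot {V : Type*} (G : SimpleGraph V) (v : V) :
    G.Reachable v (theRoot G v) :=
  (ConnectedComponent.exact (Quot.out_eq (G.connectedComponentMk v))).symm

private lemma theRoot_eq_of_adj {V : Type*} {G : SimpleGraph V} {u v : V} (h : G.Adj u v) :
    theRoot G u = theRoot G v := by
  unfold theRoot
  exact congrArg Quot.out (ConnectedComponent.sound h.reachable)

private noncomputable def thePath {V : Type*} [DecidableEq V] (G : SimpleGraph V) (v : V) :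
    G.Path v (theRoot G v) :=
  (reach_theRoot G v).some.toPath

/-- In a forest, an edge's two endpoints can't both lie on each other's path to the root. -/
private lemma not_both {V : Type*} [DecidableEq V] {G : SimpleGraph V} (hG : G.IsAcyclic) {u v : V}
    (h : G.Adj u v) (hv : v ∈ (thePath G u).1.support) : u ∉ (thePath G v).1.support := by
  classical
  intro hu
  have hroot := theRoot_eq_of_adj h
  have hq : (((thePath G u).1.dropUntil v hv).copy rfl hroot).IsPath :=
    (Walk.isPath_copy _ rfl hroot).mpr ((thePath G u).2.dropUntil hv)
  have hEq : thePath G v = ⟨((thePath G u).1.dropUntil v hv).copy rfl hroot, hq⟩ :=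
    hG.path_unique _ _
  have hu' : u ∈ ((thePath G u).1.dropUntil v hv).support := by
    have := hu
    rw [hEq] at this
    simpa using this
  have hnd : (thePath G u).1.support.Nodup := (thePath G u).2.support_nodup
  rw [← Walk.take_spec (thePath G u).1 hv, Walk.support_append] at hnd
  have hdisj := List.disjoint_of_nodup_append hnd
  have hu1 : u ∈ ((thePath G u).1.takeUntil v hv).support := Walk.start_mem_support _
  have hu2 : u ∈ ((thePath G u).1.dropUntil v hv).support.tail := by
    rw [Walk.support_eq_cons] at hu'
    rcases List.mem_cons.mp hu' with h1 | h1
    · exact absurd h1 h.ne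
    · exact h1
  exact hdisj hu1 hu2

/-- If the endpoint `v` lies on `u`'s path to the root, then `u`'s path is the edge
followed by `v`'s path; in particular its support is `u :: v :: ⋯`. -/
private lemma support_eq {V : Type*} [DecidableEq V] {G : SimpleGraph V} (hG : G.IsAcyclic) {u v : V}
    (h : G.Adj u v) (hv : v ∈ (thePath G u).1.support) :
    (thePath G u).1.support = u :: v :: (thePath G v).1.support.tail := by
  classical
  have hroot := theRoot_eq_of_adj h
  have hu : u ∉ ((thePath G v).1.copy rfl hroot.symm).support := by
    have := not_both hG h hv
    simpa using this
  have hq : (Walk.cons h ((thePath G v).1.copy rfl hroot.symm)).IsPath :=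
    Walk.IsPath.cons ((Walk.isPath_copy _ rfl hroot.symm).mpr (thePath G v).2) hu
  have hEq : thePath G u = ⟨Walk.cons h ((thePath G v).1.copy rfl hroot.symm), hq⟩ :=
    hG.path_unique _ _
  rw [hEq]
  show (Walk.cons h ((thePath G v).1.copy rfl hroot.symm)).support = _
  rw [Walk.support_cons, Walk.support_copy, ← Walk.support_eq_cons ((thePath G v).1)]

/-- At least one endpoint of an edge lies on the other endpoint's path to the root. -/
private lemma at_least_one {V : Type*} [DecidableEq V] {G : SimpleGraph V} (hG : G.IsAcyclic) {u v : V}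
    (h : G.Adj u v) (hv : v ∉ (thePath G u).1.support) : u ∈ (thePath G v).1.support := by
  classical
  have hroot := theRoot_eq_of_adj h
  have hv' : v ∉ ((thePath G u).1.copy rfl hroot).support := by simpa using hv
  have hq : (Walk.cons h.symm ((thePath G u).1.copy rfl hroot)).IsPath :=
    Walk.IsPath.cons ((Walk.isPath_copy _ rfl hroot).mpr (thePath G u).2) hv'
  have hEq : thePath G v = ⟨Walk.cons h.symm ((thePath G u).1.copy rfl hroot), hq⟩ :=
    hG.path_unique _ _
  rw [hEq]
  show u ∈ (Walk.cons h.symm ((thePath G u).1.copy rfl hroot)).support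
  rw [Walk.support_cons, Walk.support_copy]
  exact List.mem_cons_of_mem _ (Walk.start_mem_support _)

/-- A forest on `n` vertices has at most `n` edges. -/
private lemma forest_edge_bound {V : Type*} [Fintype V] (G : SimpleGraph V)
    (hG : G.IsAcyclic) : G.edgeSet.ncard ≤ Fintype.card V := by
  classical
  have key : ∀ e ∈ G.edgeSet, ∃ w x, e = s(w, x) ∧ G.Adj w x ∧
      x ∈ (thePath G w).1.support := by
    intro e he
    induction e with
    | _ u v =>
      have hadj : G.Adj u v := he
      by_cases hv : v ∈ (thePath G u).1.support
      · exact ⟨u, v, rfl, hadj, hv⟩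
      · exact ⟨v, u, Sym2.eq_swap, hadj.symm, at_least_one hG hadj hv⟩
  let f : Sym2 V → V := fun e =>
    if he : e ∈ G.edgeSet then (key e he).choose else e.out.1
  have hinj : Set.InjOn f G.edgeSet := by
    intro e1 he1 e2 he2 hfe
    simp only [f, dif_pos he1, dif_pos he2] at hfe
    obtain ⟨x1, hx1, hadj1, hs1⟩ := (key e1 he1).choose_spec
    obtain ⟨x2, hx2, hadj2, hs2⟩ := (key e2 he2).choose_spec
    rw [hfe] at hx1 hadj1 hs1
    have h1 := support_eq hG hadj1 hs1
    have h2 := support_eq hG hadj2 hs2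
    have hx : x1 = x2 := by
      have h3 := h1.symm.trans h2
      simp only [List.cons.injEq] at h3
      exact h3.2.1
    rw [hx] at hx1
    exact hx1.trans hx2.symm
  have hle := Set.ncard_le_ncard_of_injOn f (fun a _ => Set.mem_univ (f a)) hinj
    Set.finite_univ
  simpa [Set.ncard_univ, Nat.card_eq_fintype_card] using hle

/-- R is a forest spanning each part of a partition and B is the set of G-edges
between different parts, with |B| ≤ ε·n. Then R ∪ B has at most (1+ε)·n edges and
the same connected components as G. -/
theorem stmt_15 {V ι : Type*} [Fintype V] (G R HB : SimpleGraph V) (part : V → ι)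
    (ε : ℝ) (hε : 0 < ε)
    (hRG : R ≤ G) (hforest : R.IsAcyclic)
    (hRspan : ∀ u v : V, part u = part v → R.Reachable u v)
    (hHB : ∀ u v : V, HB.Adj u v ↔ G.Adj u v ∧ part u ≠ part v)
    (hBcard : (HB.edgeSet.ncard : ℝ) ≤ ε * Fintype.card V) :
    ((R ⊔ HB).edgeSet.ncard : ℝ) ≤ (1 + ε) * Fintype.card V ∧
    (∀ u v : V, (R ⊔ HB).Reachable u v ↔ G.Reachable u v) := by
  classical
  have hHBG : HB ≤ G := fun u v h => ((hHB u v).mp h).1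
  constructor
  · have h1 : (R ⊔ HB).edgeSet.ncard ≤ R.edgeSet.ncard + HB.edgeSet.ncard := by
      rw [edgeSet_sup]
      exact Set.ncard_union_le _ _
    have h2 : R.edgeSet.ncard ≤ Fintype.card V := forest_edge_bound R hforest
    have h1' : ((R ⊔ HB).edgeSet.ncard : ℝ) ≤ (R.edgeSet.ncard : ℝ) + (HB.edgeSet.ncard : ℝ) := by
      exact_mod_cast h1
    have h2' : (R.edgeSet.ncard : ℝ) ≤ (Fintype.card V : ℝ) := by exact_mod_cast h2
    nlinarith [h1', h2', hBcard]
  · intro u v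
    constructor
    · exact fun h => h.mono (sup_le hRG hHBG)
    · intro h
      obtain ⟨p⟩ := h
      induction p with
      | nil => exact Reachable.refl _
      | @cons a b c hadj _ ih =>
        refine Reachable.trans (v := b) ?_ ih
        by_cases hp : part a = part b
        · exact (hRspan _ _ hp).mono le_sup_left
        · exact (((hHB _ _).mpr ⟨hadj, hp⟩).reachable).mono le_sup_right
end
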